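/- arXiv:0811.3093 — 3 statements merged into one kernel-verified Lean document; each statement's English description precedes it below -/
import Mathlib

section
/- (Agler–Young) If A and B are cyclic matrices in the spectral ball Ω_n, then l_{Ω_n}(A,B) = l_{G_n}(σ(A), σ(B)). -/
open Metric Set Polynomial

noncomputable section

/-- `sigmaMap n A` is `(σ₁(A), …, σₙ(A))` where
`det (t•I - A) = tⁿ + ∑_{j=1}^n (-1)^j σ_j(A) t^{n-j}`;
the `j`-th coordinate (for `j : Fin n`, representing the index `j+1 ∈ {1,…,n}`)
is `(-1)^(j+1) * (coefficient of t^(n-(j+1)) in the characteristic polynomial)`. -/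
def sigmaMap (n : ℕ) (A : Matrix (Fin n) (Fin n) ℂ) : Fin n → ℂ :=
  fun j => (-1 : ℂ) ^ (j.val + 1) * A.charpoly.coeff (n - (j.val + 1))

/-- The spectral ball `Ω_n`: matrices whose eigenvalues all have modulus `< 1`. -/
def specBall (n : ℕ) : Set (Matrix (Fin n) (Fin n) ℂ) :=
  {A | ∀ μ ∈ A.charpoly.roots, ‖μ‖ < 1}

/-- The symmetrized polydisc `G_n = σ(Ω_n)`. -/
def symPolydisc (n : ℕ) : Set (Fin n → ℂ) := sigmaMap n '' specBall n

/-- The Lempert function of a subset `D ⊆ ℂⁿ`. -/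
def lempertG (n : ℕ) (D : Set (Fin n → ℂ)) (z w : Fin n → ℂ) : ℝ :=
  sInf {r : ℝ | ∃ α : ℂ, ‖α‖ = r ∧ ‖α‖ < 1 ∧
    ∃ φ : ℂ → (Fin n → ℂ),
      (∀ i, DifferentiableOn ℂ (fun ζ => φ ζ i) (ball (0:ℂ) 1)) ∧
      MapsTo φ (ball (0:ℂ) 1) D ∧ φ 0 = z ∧ φ α = w}

/-- The Lempert function of a set of matrices. -/
def lempertM (n : ℕ) (D : Set (Matrix (Fin n) (Fin n) ℂ))
    (z w : Matrix (Fin n) (Fin n) ℂ) : ℝ :=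
  sInf {r : ℝ | ∃ α : ℂ, ‖α‖ = r ∧ ‖α‖ < 1 ∧
    ∃ φ : ℂ → Matrix (Fin n) (Fin n) ℂ,
      (∀ i j, DifferentiableOn ℂ (fun ζ => φ ζ i j) (ball (0:ℂ) 1)) ∧
      MapsTo φ (ball (0:ℂ) 1) D ∧ φ 0 = z ∧ φ α = w}

/-- A matrix is cyclic (non-derogatory) iff its minimal polynomial equals its
characteristic polynomial. -/
def IsCyclicMat {n : ℕ} (A : Matrix (Fin n) (Fin n) ℂ) : Prop :=
  minpoly ℂ A = A.charpoly

/-!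
Composing a holomorphic disc in `Ω_n` with `σ` gives a disc in `G_n` through `σ A` and `σ B`
with the same parameter, because the coefficients of the characteristic polynomial are
polynomials in the entries; hence `l_{G_n}(σ A, σ B) ≤ l_{Ω_n}(A, B)`.

Conversely, a cyclic matrix is similar to the companion matrix of its characteristic
polynomial: `A = P C(σ A) P⁻¹` and `B = Q C(σ B) Q⁻¹`. A disc `φ` in `G_n` with
`φ 0 = σ A` and `φ α = σ B`, `α ≠ 0`, lifts to `ζ ↦ M ζ * C(φ ζ) * (M ζ)⁻¹`, where
`M ζ = P f(ζ / α)` and `f` is an entire curve in `GL_n` from `1` to `P⁻¹ Q` (diagonal matrices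
and transvections, which generate `GL_n`, are joined to `1` explicitly). The lift stays in `Ω_n`
because membership in `Ω_n` depends on `σ` only. If `α = 0`, then `σ A = σ B` and the
constant disc lifts with every parameter in `(0, 1)`, so both infima vanish.
-/
open Matrix

namespace Polynomial

variable {K : Type*} [Field K] {n : ℕ}

lemma X_pow_natDegree_modByMonic {p : K[X]} (hp : p.Monic) :
    X ^ p.natDegree %ₘ p = X ^ p.natDegree - p := by
  have hdeg : (X ^ p.natDegree : K[X]).degree = p.degree := by
    rw [degree_X_pow, degree_eq_natDegree hp.ne_zero]
  rw [modByMonic_eq_of_dvd_sub hp (by rw [sub_sub_cancel]), (modByMonic_eq_self_iff hp).2]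
  rw [← hdeg]
  exact degree_sub_lt_left hdeg (pow_ne_zero _ X_ne_zero)
    (by rw [leadingCoeff_X_pow, hp.leadingCoeff])

lemma aeval_ofFn [DecidableEq K] {S : Type*} [Ring S] [Algebra K S] (x : S) (c : Fin n → K) :
    aeval x (ofFn n c) = ∑ k, c k • x ^ (k : ℕ) := by
  simp only [ofFn_eq_sum_monomial, map_sum, aeval_monomial, Algebra.smul_def]

lemma exists_mem_roots_dvd_divByMonic [IsAlgClosed K] {p g : K[X]} (hp : p ≠ 0) (hg : g ∣ p)
    (hdeg : g.natDegree < p.natDegree) : ∃ μ ∈ p.roots, g ∣ p /ₘ (X - C μ) := by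
  obtain ⟨h, rfl⟩ := hg
  have hh : h.degree ≠ 0 := by
    rw [natDegree_mul (left_ne_zero_of_mul hp) (right_ne_zero_of_mul hp)] at hdeg
    exact (natDegree_pos_iff_degree_pos.mp (by omega)).ne'
  obtain ⟨μ, hμ⟩ := IsAlgClosed.exists_root h hh
  refine ⟨μ, mem_roots'.mpr ⟨hp, by simp [hμ.eq_zero]⟩, h /ₘ (X - C μ), ?_⟩
  refine mul_left_cancel₀ (X_sub_C_ne_zero μ) ?_
  rw [mul_divByMonic_eq_iff_isRoot.mpr (by simp [hμ.eq_zero]), mul_left_comm,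
    mul_divByMonic_eq_iff_isRoot.mpr hμ]

end Polynomial

namespace Matrix

variable {K : Type*} [Field K] {n : ℕ}

def companion (a : Fin n → K) : Matrix (Fin n) (Fin n) K :=
  of fun i j => if (j : ℕ) + 1 = n then -a i else if (i : ℕ) = j + 1 then 1 else 0

lemma companion_eq_leftMulMatrix {p : K[X]} (hp : p.Monic) :
    companion (fun k : Fin p.natDegree => p.coeff k) =
      Algebra.leftMulMatrix (AdjoinRoot.powerBasisAux' hp) (AdjoinRoot.root p) := by
  ext i j
  have hroot : AdjoinRoot.root p * AdjoinRoot.powerBasisAux' hp j =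
      AdjoinRoot.mk p (X ^ ((j : ℕ) + 1)) := by
    rw [show AdjoinRoot.powerBasisAux' hp j = _ from (AdjoinRoot.powerBasis' hp).basis_eq_pow j,
      AdjoinRoot.powerBasis'_gen, ← pow_succ', map_pow, AdjoinRoot.mk_X]
  rw [Algebra.leftMulMatrix_eq_repr_mul, hroot, AdjoinRoot.powerBasisAux'_repr_apply_to_fun,
    AdjoinRoot.modByMonicHom_mk]
  simp only [companion, of_apply]
  rcases (show (j : ℕ) + 1 ≤ p.natDegree from j.isLt).eq_or_lt with hj | hj
  · rw [if_pos hj, hj, X_pow_natDegree_modByMonic hp, coeff_sub,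
      coeff_X_pow, if_neg i.isLt.ne, zero_sub]
  · rw [(modByMonic_eq_self_iff hp).2 (by rwa [degree_X_pow, degree_eq_natDegree hp.ne_zero,
      Nat.cast_lt]), coeff_X_pow]
    simp [hj.ne]

lemma charpoly_companion_of_monic {p : K[X]} (hp : p.Monic) (hn : p.natDegree = n) :
    (companion fun k : Fin n => p.coeff k).charpoly = p := by
  subst hn
  rw [companion_eq_leftMulMatrix hp]
  refine (charpoly_leftMulMatrix (AdjoinRoot.powerBasis' hp)).trans ?_
  rw [AdjoinRoot.powerBasis'_gen, AdjoinRoot.minpoly_root hp.ne_zero, hp.leadingCoeff, inv_one,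
    map_one, mul_one]

lemma charpoly_companion [DecidableEq K] (a : Fin n → K) :
    (companion a).charpoly = X ^ n + ofFn n a := by
  have hdeg := ofFn_degree_lt a
  convert charpoly_companion_of_monic (monic_X_pow_add hdeg) _ using 3
  · ext k
    rw [coeff_add, coeff_X_pow, if_neg k.isLt.ne, zero_add, ofFn_coeff_eq_val_of_lt _ k.isLt]
  · rw [natDegree_add_eq_left_of_degree_lt (by rwa [degree_X_pow]), natDegree_X_pow]

lemma charpoly_eq_X_pow_add_ofFn [DecidableEq K] (A : Matrix (Fin n) (Fin n) K) :
    A.charpoly = X ^ n + ofFn n fun k => A.charpoly.coeff k := by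
  rw [← charpoly_companion, charpoly_companion_of_monic A.charpoly_monic (by simp)]

lemma pow_eq_neg_sum_charpoly_coeff_smul (A : Matrix (Fin n) (Fin n) K) :
    A ^ n = -∑ k : Fin n, A.charpoly.coeff k • A ^ (k : ℕ) := by
  classical
  have h := aeval_self_charpoly A
  rw [charpoly_eq_X_pow_add_ofFn, map_add, map_pow, aeval_X, aeval_ofFn] at h
  exact eq_neg_of_add_eq_zero_left h

def krylovMatrix (A : Matrix (Fin n) (Fin n) K) (v : Fin n → K) : Matrix (Fin n) (Fin n) K :=
  of fun i k => (A ^ (k : ℕ) *ᵥ v) i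

lemma mul_krylovMatrix (A : Matrix (Fin n) (Fin n) K) (v : Fin n → K) :
    A * krylovMatrix A v = krylovMatrix A v * companion fun k => A.charpoly.coeff k := by
  ext i j
  have hcol : (A * krylovMatrix A v) i j = (A ^ ((j : ℕ) + 1) *ᵥ v) i := by
    rw [pow_succ', ← mulVec_mulVec]; rfl
  rw [hcol, mul_apply]
  rcases (show (j : ℕ) + 1 ≤ n from j.isLt).eq_or_lt with hj | hj
  · simp only [krylovMatrix, companion, of_apply, if_pos hj, mul_neg, Finset.sum_neg_distrib]
    rw [hj, pow_eq_neg_sum_charpoly_coeff_smul, neg_mulVec, sum_mulVec]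
    simp [smul_mulVec, mul_comm]
  · rw [Finset.sum_eq_single ⟨j + 1, hj⟩]
    · simp [krylovMatrix, companion, hj.ne]
    · intro k _ hk
      simp [companion, hj.ne, Fin.ext_iff.not.mp hk]
    · simp

lemma aeval_divByMonic_ne_zero {A : Matrix (Fin n) (Fin n) K} (hA : minpoly K A = A.charpoly)
    {μ : K} (hμ : μ ∈ A.charpoly.roots) : aeval A (A.charpoly /ₘ (X - C μ)) ≠ 0 := by
  have hμ' : A.charpoly.IsRoot μ := isRoot_of_mem_roots hμ
  have hne : A.charpoly /ₘ (X - C μ) ≠ 0 := by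
    intro h
    have := mul_divByMonic_eq_iff_isRoot.mpr hμ'
    rw [h, mul_zero] at this
    exact A.charpoly_monic.ne_zero this.symm
  intro h
  have hle := natDegree_le_of_dvd (hA ▸ minpoly.dvd K A h) hne
  rw [natDegree_divByMonic _ (monic_X_sub_C μ), natDegree_X_sub_C] at hle
  have := natDegree_pos_iff_degree_pos.mpr (degree_pos_of_root A.charpoly_monic.ne_zero hμ')
  omega

lemma exists_forall_aeval_divByMonic_mulVec_ne_zero [Infinite K] {A : Matrix (Fin n) (Fin n) K}
    (hA : minpoly K A = A.charpoly) :
    ∃ v, ∀ μ ∈ A.charpoly.roots, aeval A (A.charpoly /ₘ (X - C μ)) *ᵥ v ≠ 0 := by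
  classical
  have hproper : ⊤ ∉ A.charpoly.roots.toFinset.image
      fun μ => LinearMap.ker (aeval A (A.charpoly /ₘ (X - C μ))).mulVecLin := by
    simp only [Finset.mem_image, Multiset.mem_toFinset, not_exists, not_and]
    intro μ hμ hker
    apply aeval_divByMonic_ne_zero hA hμ
    rw [← Matrix.toLin'.map_eq_zero_iff, Matrix.toLin'_apply']
    exact LinearMap.ker_eq_top.mp hker
  obtain ⟨v, hv⟩ := (Set.ne_univ_iff_exists_notMem _).mp
    (Subspace.biUnion_ne_univ_of_top_notMem hproper)
  exact ⟨v, fun μ hμ hv0 => hv (Set.mem_iUnion₂.mpr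
    ⟨_, Finset.mem_image_of_mem _ (Multiset.mem_toFinset.mpr hμ), hv0⟩)⟩

variable [IsAlgClosed K]

lemma linearIndependent_pow_mulVec {A : Matrix (Fin n) (Fin n) K} {v : Fin n → K}
    (hv : ∀ μ ∈ A.charpoly.roots, aeval A (A.charpoly /ₘ (X - C μ)) *ᵥ v ≠ 0) :
    LinearIndependent K fun k : Fin n => A ^ (k : ℕ) *ᵥ v := by
  classical
  rw [Fintype.linearIndependent_iff]
  intro c hc
  by_contra! hc0
  have hq0 : ofFn n c ≠ 0 := by
    rw [← (ofFn n).map_zero]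
    exact (injective_ofFn n).ne (Function.ne_iff.mpr hc0)
  have hqv : aeval A (ofFn n c) *ᵥ v = 0 := by
    rw [aeval_ofFn, sum_mulVec]
    simpa [smul_mulVec] using hc
  set g := EuclideanDomain.gcd (ofFn n c) A.charpoly
  have hgv : aeval A g *ᵥ v = 0 := by
    rw [show g = _ from EuclideanDomain.gcd_eq_gcd_ab _ _, mul_comm (ofFn n c), map_add, map_mul,
      map_mul, aeval_self_charpoly, zero_mul, add_zero, ← mulVec_mulVec, hqv, mulVec_zero]
  have hdeg : g.natDegree < A.charpoly.natDegree := by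
    refine (natDegree_le_of_dvd (EuclideanDomain.gcd_dvd_left _ _) hq0).trans_lt ?_
    rw [natDegree_lt_iff_degree_lt hq0, charpoly_natDegree_eq_dim, Fintype.card_fin]
    exact ofFn_degree_lt c
  obtain ⟨μ, hμ, r, hr⟩ := exists_mem_roots_dvd_divByMonic A.charpoly_monic.ne_zero
    (EuclideanDomain.gcd_dvd_right _ _) hdeg
  apply hv μ hμ
  rw [hr, mul_comm, map_mul, ← mulVec_mulVec, hgv, mulVec_zero]

lemma exists_isUnit_conj_companion {A : Matrix (Fin n) (Fin n) K}
    (hA : minpoly K A = A.charpoly) :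
    ∃ P : Matrix (Fin n) (Fin n) K, IsUnit P.det ∧
      P * companion (fun k => A.charpoly.coeff k) * P⁻¹ = A := by
  obtain ⟨v, hv⟩ := exists_forall_aeval_divByMonic_mulVec_ne_zero hA
  have hP : IsUnit (krylovMatrix A v).det := (isUnit_iff_isUnit_det _).mp
    (linearIndependent_cols_iff_isUnit.mp (linearIndependent_pow_mulVec hv))
  exact ⟨_, hP, by rw [← mul_krylovMatrix, mul_nonsing_inv_cancel_right _ _ hP]⟩

end Matrix

section SigmaCoordinates

variable {n : ℕ}

/-- The lower coefficients of the monic polynomial whose `sigmaMap`-coordinates are `s`. -/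
def coeffsOfSigma (s : Fin n → ℂ) (k : Fin n) : ℂ :=
  (-1) ^ (n - k) * s k.rev

lemma coeffsOfSigma_sigmaMap (M : Matrix (Fin n) (Fin n) ℂ) :
    coeffsOfSigma (sigmaMap n M) = fun k : Fin n => M.charpoly.coeff k := by
  ext k
  have hk := k.isLt
  rw [coeffsOfSigma, sigmaMap, Fin.val_rev, ← mul_assoc, ← pow_add,
    show n - (k + 1) + 1 = n - k by omega, show n - (n - k) = k by omega, ← two_mul, pow_mul,
    neg_one_sq, one_pow, one_mul]

lemma charpoly_companion_coeffsOfSigma (M : Matrix (Fin n) (Fin n) ℂ) :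
    (companion (coeffsOfSigma (sigmaMap n M))).charpoly = M.charpoly := by
  rw [coeffsOfSigma_sigmaMap]
  exact charpoly_companion_of_monic M.charpoly_monic (by simp [charpoly_natDegree_eq_dim])

lemma sigmaMap_companion_coeffsOfSigma (s : Fin n → ℂ) :
    sigmaMap n (companion (coeffsOfSigma s)) = s := by
  classical
  ext j
  have hj := j.isLt
  rw [sigmaMap, charpoly_companion, coeff_add, coeff_X_pow, if_neg (by omega), zero_add,
    ofFn_coeff_eq_val_of_lt _ (by omega), coeffsOfSigma, ← mul_assoc, ← pow_add]
  simp only [show n - (n - (j + 1)) = j + 1 by omega, ← two_mul, pow_mul, neg_one_sq, one_pow,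
    one_mul]
  congr 1
  ext
  simp only [Fin.val_rev]
  omega

lemma sigmaMap_conj {P : Matrix (Fin n) (Fin n) ℂ} (hP : IsUnit P.det)
    (N : Matrix (Fin n) (Fin n) ℂ) : sigmaMap n (P * N * P⁻¹) = sigmaMap n N := by
  unfold sigmaMap
  rw [← ((isUnit_iff_isUnit_det P).mpr hP).unit_spec, charpoly_units_conj]

lemma sigmaMap_preimage_symPolydisc : sigmaMap n ⁻¹' symPolydisc n = specBall n := by
  refine Subset.antisymm ?_ fun M hM => mem_image_of_mem _ hM
  rintro M ⟨W, hW, hσ⟩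
  rwa [specBall, mem_ofPred_eq, ← charpoly_companion_coeffsOfSigma M, ← hσ,
    charpoly_companion_coeffsOfSigma]

end SigmaCoordinates

section DifferentiableMatrix

variable {𝕜 E ι : Type*} [NontriviallyNormedField 𝕜] [NormedAddCommGroup E] [NormedSpace 𝕜 E]
  [Fintype ι] [DecidableEq ι] {s : Set E} {φ ψ : E → Matrix ι ι 𝕜}

/- Entrywise differentiable matrix functions are matrices over this subalgebra; `det`, `adjugate`
and `charpoly` commute with evaluation at a point, a ring homomorphism, so they preserve
differentiability. -/
variable (𝕜) in
def differentiableOnSubalgebra (s : Set E) : Subalgebra 𝕜 (E → 𝕜) where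
  carrier := {f | DifferentiableOn 𝕜 f s}
  mul_mem' hf hg := hf.mul hg
  add_mem' hf hg := hf.add hg
  algebraMap_mem' c := differentiableOn_const c

omit [Fintype ι] [DecidableEq ι] in
lemma mem_differentiableOnSubalgebra {f : E → 𝕜} :
    f ∈ differentiableOnSubalgebra 𝕜 s ↔ DifferentiableOn 𝕜 f s :=
  Iff.rfl

omit [Fintype ι] [DecidableEq ι] in
lemma exists_differentiableOnSubalgebra_matrix
    (hφ : ∀ i j, DifferentiableOn 𝕜 (fun x => φ x i j) s) :
    ∃ Φ : Matrix ι ι (differentiableOnSubalgebra 𝕜 s), ∀ x,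
      Φ.map ((Pi.evalRingHom _ x).comp (differentiableOnSubalgebra 𝕜 s).val.toRingHom) = φ x :=
  ⟨of fun i j => ⟨fun x => φ x i j, hφ i j⟩, fun _ => rfl⟩

lemma differentiableOn_det (hφ : ∀ i j, DifferentiableOn 𝕜 (fun x => φ x i j) s) :
    DifferentiableOn 𝕜 (fun x => (φ x).det) s := by
  obtain ⟨Φ, hΦ⟩ := exists_differentiableOnSubalgebra_matrix hφ
  refine (mem_differentiableOnSubalgebra.mp (Φ.det).2).congr fun x _ => ?_
  rw [← hΦ x, ← RingHom.mapMatrix_apply, ← RingHom.map_det]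
  rfl

lemma differentiableOn_charpoly_coeff (hφ : ∀ i j, DifferentiableOn 𝕜 (fun x => φ x i j) s)
    (k : ℕ) : DifferentiableOn 𝕜 (fun x => (φ x).charpoly.coeff k) s := by
  obtain ⟨Φ, hΦ⟩ := exists_differentiableOnSubalgebra_matrix hφ
  refine (mem_differentiableOnSubalgebra.mp (Φ.charpoly.coeff k).2).congr fun x _ => ?_
  rw [← hΦ x, charpoly_map, coeff_map]
  rfl

lemma differentiableOn_adjugate_apply (hφ : ∀ i j, DifferentiableOn 𝕜 (fun x => φ x i j) s)
    (i j : ι) : DifferentiableOn 𝕜 (fun x => (φ x).adjugate i j) s := by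
  obtain ⟨Φ, hΦ⟩ := exists_differentiableOnSubalgebra_matrix hφ
  refine (mem_differentiableOnSubalgebra.mp (Φ.adjugate i j).2).congr fun x _ => ?_
  rw [← hΦ x, ← RingHom.mapMatrix_apply, ← RingHom.map_adjugate]
  rfl

lemma differentiableOn_inv_apply (hφ : ∀ i j, DifferentiableOn 𝕜 (fun x => φ x i j) s)
    (hdet : ∀ x ∈ s, IsUnit (φ x).det) (i j : ι) :
    DifferentiableOn 𝕜 (fun x => (φ x)⁻¹ i j) s := by
  simp only [inv_def, Matrix.smul_apply, smul_eq_mul, Ring.inverse_eq_inv']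
  exact ((differentiableOn_det hφ).inv fun x hx => (hdet x hx).ne_zero).mul
    (differentiableOn_adjugate_apply hφ i j)

omit [DecidableEq ι] in
lemma differentiableOn_mul_apply (hφ : ∀ i j, DifferentiableOn 𝕜 (fun x => φ x i j) s)
    (hψ : ∀ i j, DifferentiableOn 𝕜 (fun x => ψ x i j) s) (i j : ι) :
    DifferentiableOn 𝕜 (fun x => (φ x * ψ x) i j) s := by
  simp only [mul_apply]
  exact DifferentiableOn.fun_sum fun k _ => (hφ i k).mul (hψ k j)

lemma differentiableOn_companion_apply {n : ℕ} {a : E → Fin n → 𝕜}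
    (ha : ∀ k, DifferentiableOn 𝕜 (fun x => a x k) s) (i j : Fin n) :
    DifferentiableOn 𝕜 (fun x => companion (a x) i j) s := by
  simp only [companion, of_apply]
  split_ifs
  exacts [(ha i).neg, differentiableOn_const _, differentiableOn_const _]

end DifferentiableMatrix

section EntireCurves

variable {ι : Type*} [Fintype ι] [DecidableEq ι]

def JoinedToOneByEntireCurve (R : Matrix ι ι ℂ) : Prop :=
  ∃ f : ℂ → Matrix ι ι ℂ, (∀ i j, Differentiable ℂ fun ζ => f ζ i j) ∧
    (∀ ζ, IsUnit (f ζ).det) ∧ f 0 = 1 ∧ f 1 = R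

lemma JoinedToOneByEntireCurve.mul {R S : Matrix ι ι ℂ} (hR : JoinedToOneByEntireCurve R)
    (hS : JoinedToOneByEntireCurve S) : JoinedToOneByEntireCurve (R * S) := by
  obtain ⟨f, hfd, hfu, hf0, hf1⟩ := hR
  obtain ⟨g, hgd, hgu, hg0, hg1⟩ := hS
  refine ⟨fun ζ => f ζ * g ζ, fun i j => ?_, fun ζ => ?_, by simp [hf0, hg0],
    by simp [hf1, hg1]⟩
  · simp only [mul_apply]
    exact Differentiable.fun_sum fun k _ => (hfd i k).mul (hgd k j)
  · rw [det_mul]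
    exact (hfu ζ).mul (hgu ζ)

lemma joinedToOneByEntireCurve_diagonal {d : ι → ℂ} (hd : ∀ i, d i ≠ 0) :
    JoinedToOneByEntireCurve (diagonal d) := by
  refine ⟨fun ζ => diagonal fun i => Complex.exp (ζ * Complex.log (d i)), fun i j => ?_,
    fun ζ => ?_, by simp, by simp [Complex.exp_log (hd _)]⟩
  · simp only [diagonal_apply]
    split_ifs
    exacts [by fun_prop, differentiable_const _]
  · simp [det_diagonal, Finset.prod_ne_zero_iff, Complex.exp_ne_zero]

lemma joinedToOneByEntireCurve_transvection (t : TransvectionStruct ι ℂ) :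
    JoinedToOneByEntireCurve t.toMatrix := by
  refine ⟨fun ζ => transvection t.i t.j (ζ * t.c), fun i j => ?_, fun ζ => ?_,
    by simp [transvection_zero], by simp [TransvectionStruct.toMatrix]⟩
  · simp only [transvection, Matrix.add_apply, single_apply]
    split_ifs
    exacts [by fun_prop, differentiable_const _]
  · simp [det_transvection_of_ne _ _ t.hij]

lemma joinedToOneByEntireCurve_of_isUnit_det {R : Matrix ι ι ℂ} (hR : IsUnit R.det) :
    JoinedToOneByEntireCurve R :=
  diagonal_transvection_induction_of_det_ne_zero _ R hR.ne_zero
    (fun _ hd => joinedToOneByEntireCurve_diagonal fun i hi =>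
      hd (by rw [det_diagonal]; exact Finset.prod_eq_zero (Finset.mem_univ i) hi))
    joinedToOneByEntireCurve_transvection fun _ _ _ _ => JoinedToOneByEntireCurve.mul

end EntireCurves

lemma csInf_eq_of_subset_of_subset_closure {α : Type*} [ConditionallyCompleteLinearOrder α]
    [TopologicalSpace α] [ClosedIciTopology α] {s t : Set α} (hst : s ⊆ t)
    (hts : t ⊆ closure s) (hs : BddBelow s) : sInf s = sInf t := by
  rcases s.eq_empty_or_nonempty with rfl | hne
  · rw [show t = ∅ by simpa using hts]
  · exact ((isGLB_iff_of_subset_of_subset_closure hst hts).mp (isGLB_csInf hne hs)).csInf_eq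
      (hne.mono hst) |>.symm

section Lempert

def lempertSetM (n : ℕ) (D : Set (Matrix (Fin n) (Fin n) ℂ)) (z w : Matrix (Fin n) (Fin n) ℂ) :
    Set ℝ :=
  {r : ℝ | ∃ α : ℂ, ‖α‖ = r ∧ ‖α‖ < 1 ∧
    ∃ φ : ℂ → Matrix (Fin n) (Fin n) ℂ,
      (∀ i j, DifferentiableOn ℂ (fun ζ => φ ζ i j) (ball (0:ℂ) 1)) ∧
      MapsTo φ (ball (0:ℂ) 1) D ∧ φ 0 = z ∧ φ α = w}

def lempertSetG (n : ℕ) (D : Set (Fin n → ℂ)) (z w : Fin n → ℂ) : Set ℝ :=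
  {r : ℝ | ∃ α : ℂ, ‖α‖ = r ∧ ‖α‖ < 1 ∧
    ∃ φ : ℂ → (Fin n → ℂ),
      (∀ i, DifferentiableOn ℂ (fun ζ => φ ζ i) (ball (0:ℂ) 1)) ∧
      MapsTo φ (ball (0:ℂ) 1) D ∧ φ 0 = z ∧ φ α = w}

variable {n : ℕ}

lemma lempertM_eq_sInf (D : Set (Matrix (Fin n) (Fin n) ℂ)) (z w : Matrix (Fin n) (Fin n) ℂ) :
    lempertM n D z w = sInf (lempertSetM n D z w) :=
  rfl

lemma lempertG_eq_sInf (D : Set (Fin n → ℂ)) (z w : Fin n → ℂ) :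
    lempertG n D z w = sInf (lempertSetG n D z w) :=
  rfl

lemma bddBelow_lempertSetM (D : Set (Matrix (Fin n) (Fin n) ℂ))
    (z w : Matrix (Fin n) (Fin n) ℂ) :
    BddBelow (lempertSetM n D z w) :=
  ⟨0, fun _ ⟨α, hα, _⟩ => hα ▸ norm_nonneg α⟩

lemma lempertSetM_subset_lempertSetG (D : Set (Matrix (Fin n) (Fin n) ℂ))
    (A B : Matrix (Fin n) (Fin n) ℂ) :
    lempertSetM n D A B ⊆ lempertSetG n (sigmaMap n '' D) (sigmaMap n A) (sigmaMap n B) := by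
  rintro _ ⟨α, rfl, hα, φ, hφd, hφD, rfl, rfl⟩
  exact ⟨α, rfl, hα, fun ζ => sigmaMap n (φ ζ),
    fun i => (differentiableOn_charpoly_coeff hφd _).const_mul _,
    fun ζ hζ => mem_image_of_mem _ (hφD hζ), rfl, rfl⟩

lemma Ico_subset_lempertSetG {D : Set (Fin n → ℂ)} {z w : Fin n → ℂ}
    (h : 0 ∈ lempertSetG n D z w) : Ico 0 1 ⊆ lempertSetG n D z w := by
  obtain ⟨α, hα, -, φ, -, hφD, rfl, rfl⟩ := h
  rw [norm_eq_zero.mp hα]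
  intro r ⟨hr0, hr1⟩
  refine ⟨r, by simp [abs_of_nonneg hr0], by simpa [abs_of_nonneg hr0], fun _ => φ 0,
    fun _ => differentiableOn_const _, fun _ _ => hφD (mem_ball_self one_pos), rfl, rfl⟩

lemma mem_lempertSetM_of_mem_lempertSetG {A B : Matrix (Fin n) (Fin n) ℂ}
    (hA : IsCyclicMat A) (hB : IsCyclicMat B) {r : ℝ}
    (hr : r ∈ lempertSetG n (symPolydisc n) (sigmaMap n A) (sigmaMap n B)) (hr0 : r ≠ 0) :
    r ∈ lempertSetM n (specBall n) A B := by
  obtain ⟨α, rfl, hα1, φ, hφd, hφD, hφ0, hφα⟩ := hr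
  have hα0 : α ≠ 0 := by rintro rfl; simp at hr0
  obtain ⟨P, hP, hPA⟩ := exists_isUnit_conj_companion hA
  obtain ⟨Q, hQ, hQB⟩ := exists_isUnit_conj_companion hB
  obtain ⟨f, hfd, hfu, hf0, hf1⟩ := joinedToOneByEntireCurve_of_isUnit_det (R := P⁻¹ * Q)
    (by rw [det_mul]; exact (isUnit_nonsing_inv_det P hP).mul hQ)
  set M : ℂ → Matrix (Fin n) (Fin n) ℂ := fun ζ => P * f (ζ / α)
  have hMd : ∀ i j, DifferentiableOn ℂ (fun ζ => M ζ i j) (ball 0 1) :=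
    differentiableOn_mul_apply (fun _ _ => differentiableOn_const _)
      fun i j => ((hfd i j).comp (differentiable_id.div_const α)).differentiableOn
  have hMu : ∀ ζ, IsUnit (M ζ).det := fun ζ => by rw [det_mul]; exact hP.mul (hfu _)
  refine ⟨α, rfl, hα1, fun ζ => M ζ * companion (coeffsOfSigma (φ ζ)) * (M ζ)⁻¹,
    differentiableOn_mul_apply (differentiableOn_mul_apply hMd
      (differentiableOn_companion_apply fun k => (hφd k.rev).const_mul _))
      (differentiableOn_inv_apply hMd fun ζ _ => hMu ζ), fun ζ hζ => ?_, ?_, ?_⟩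
  · rw [← sigmaMap_preimage_symPolydisc, mem_preimage,
      sigmaMap_conj (hMu ζ), sigmaMap_companion_coeffsOfSigma]
    exact hφD hζ
  · simp [M, hf0, hφ0, coeffsOfSigma_sigmaMap, hPA]
  · simp [M, div_self hα0, hf1, hφα, coeffsOfSigma_sigmaMap, mul_nonsing_inv_cancel_left _ _ hP,
      hQB]

end Lempert

theorem lempert_eq_of_cyclic_general (n : ℕ) (A B : Matrix (Fin n) (Fin n) ℂ)
    (hAc : IsCyclicMat A) (hBc : IsCyclicMat B) :
    lempertM n (specBall n) A B =
      lempertG n (symPolydisc n) (sigmaMap n A) (sigmaMap n B) := by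
  rw [lempertM_eq_sInf, lempertG_eq_sInf]
  refine csInf_eq_of_subset_of_subset_closure (lempertSetM_subset_lempertSetG _ A B) ?_
    (bddBelow_lempertSetM _ A B)
  intro r hr
  rcases eq_or_ne r 0 with rfl | hr0
  · have hIoo : Ioo 0 1 ⊆ lempertSetM n (specBall n) A B := fun t ht =>
      mem_lempertSetM_of_mem_lempertSetG hAc hBc
        (Ico_subset_lempertSetG hr (Ioo_subset_Ico_self ht)) ht.1.ne'
    exact closure_mono hIoo (by rw [closure_Ioo zero_ne_one]; exact left_mem_Icc.mpr zero_le_one)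
  · exact subset_closure (mem_lempertSetM_of_mem_lempertSetG hAc hBc hr hr0)

/-- Agler–Young: if `A, B ∈ Ω_n` are cyclic, then
`l_{Ω_n}(A,B) = l_{G_n}(σ(A),σ(B))`. -/
theorem lempert_eq_of_cyclic (n : ℕ) (A B : Matrix (Fin n) (Fin n) ℂ)
    (hA : A ∈ specBall n) (hB : B ∈ specBall n)
    (hAc : IsCyclicMat A) (hBc : IsCyclicMat B) :
    lempertM n (specBall n) A B =
      lempertG n (symPolydisc n) (sigmaMap n A) (sigmaMap n B) :=
  lempert_eq_of_cyclic_general n A B hAc hBc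
end
end

section
/- Let B ∈ M_n be a nilpotent matrix in Jordan form: its only nonzero entries are b_{j−1,j} = 1 for j in a set F_1 ⊂ {2,…,n}; let F_0 = {1,…,n} \ F_1 = {1 = b_1 < b_2 < … < b_{n−r}} (where r = rank B), ordered so that b_{l+1} − b_l is nondecreasing (with b_{n−r+1} = n+1). For 1 ≤ i ≤ n set d_i = 1 + #(F_0 ∩ {n−i+2,…,n}). Then for every M ∈ M_n the polynomial function t ↦ σ_i(B + tM) vanishes to order at least d_i at t = 0 (i.e. every monomial of σ_i(B + M), viewed as a polynomial in the entries of M, has degree at least d_i), and there exists M ∈ M_n for which the vanishing order at t = 0 is exactly d_i. -/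
open Metric Set Polynomial

noncomputable section

/-! `σ_i(A)` is the sum of the principal `i × i` minors of `A`, so `σ_i(B + tM)` is a sum of
determinants `det (B_S + t M_S)` over `i`-element index sets `S`. Call `a ∈ S` a chain head of
`S` if it does not continue a Jordan chain inside `S`, i.e. not (`a ∈ F₁` and `a - 1 ∈ S`).
The column of `B_S` at a head is zero, so the whole column is divisible by `t`, and the minor
vanishes to order at least the number of heads. Each Jordan block met by `S` contains a head of
`S` (the least element of `S` in it). The `e = #(F₀ ∩ [n-i+2, n])` blocks starting in
`[n-i+2, n]` are the last, hence (the block sizes being nondecreasing) the largest ones, and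
together they have at most `i - 1` elements; so `S` meets at least `e + 1 = d_i` blocks.

For sharpness let `S₀ = {n-i+1, …, n}` and choose `M` so that `B_{S₀} + tM_{S₀}` is the
permutation matrix of the cyclic shift `a ↦ a - 1` of `S₀`, with entry `t` in the `d_i` head
columns and `1` elsewhere; its determinant is `±t^{d_i}`. Every other `S` contains an index below
`S₀`, and its smallest element gives a zero column. -/

open Finset

section Determinant

variable {R m : Type*} [CommRing R] [Fintype m] [DecidableEq m]

theorem Matrix.pow_card_dvd_det_of_dvd_col (A : Matrix m m R) {a : R} (H : Finset m)
    (h : ∀ j ∈ H, ∀ i, a ∣ A i j) : a ^ #H ∣ A.det := by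
  rw [Matrix.det_apply']
  refine Finset.dvd_sum fun σ _ => Dvd.dvd.mul_left ?_ _
  calc a ^ #H = ∏ _j ∈ H, a := (Finset.prod_const a).symm
    _ ∣ ∏ j ∈ H, A (σ j) j := Finset.prod_dvd_prod_of_dvd _ _ fun j hj => h j hj (σ j)
    _ ∣ ∏ j, A (σ j) j := Finset.prod_dvd_prod_of_subset _ _ _ (Finset.subset_univ H)

theorem Matrix.det_eq_sign_mul_prod_of_col_support (A : Matrix m m R) (σ : Equiv.Perm m)
    (h : ∀ i j, i ≠ σ j → A i j = 0) :
    A.det = (Equiv.Perm.sign σ : ℤ) * ∏ j, A (σ j) j := by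
  rw [Matrix.det_apply', Finset.sum_eq_single σ (fun τ _ hτ => ?_) (by simp)]
  obtain ⟨j, hj⟩ := not_forall.1 (mt Equiv.ext hτ)
  exact mul_eq_zero_of_right _ (Finset.prod_eq_zero (Finset.mem_univ j) (h _ _ hj))

end Determinant

theorem iteratedDeriv_eval_zero {𝕜 : Type*} [NontriviallyNormedField 𝕜] (p : 𝕜[X])
    (k : ℕ) : iteratedDeriv k (fun t => p.eval t) 0 = k.factorial * p.coeff k := by
  have hiter : ∀ q : 𝕜[X],
      deriv^[k] (fun t => q.eval t) = fun t => (derivative^[k] q).eval t := by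
    induction k with
    | zero => simp
    | succ k ih =>
      intro q
      rw [Function.iterate_succ_apply, Function.iterate_succ_apply, ← ih]
      exact congrArg _ (funext fun t => q.deriv)
  rw [iteratedDeriv_eq_iterate, hiter]
  dsimp only
  rw [← coeff_zero_eq_eval_zero, coeff_iterate_derivative]
  simp [Nat.descFactorial_self, nsmul_eq_mul]

theorem sigmaMap_eq_sum_minors {n : ℕ} (A : Matrix (Fin n) (Fin n) ℂ) (i : Fin n) :
    sigmaMap n A i = ∑ s ∈ univ.powersetCard (i + 1),
      (A.submatrix (Subtype.val : s → Fin n) Subtype.val).det := by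
  have := A.charpoly_coeff_eq_sum_minors (i + 1) (by simp)
  rw [Fintype.card_fin] at this
  rw [sigmaMap, this, ← mul_assoc, ← mul_pow, neg_one_mul, neg_neg, one_pow, one_mul]

section Pencil

variable {R m : Type*} [CommRing R]

def pencil (B M : Matrix m m R) : Matrix m m R[X] := B.map C + (X : R[X]) • M.map C

theorem pencil_apply (B M : Matrix m m R) (i j : m) :
    pencil B M i j = C (B i j) + X * C (M i j) := rfl

theorem eval_det_pencil [Fintype m] [DecidableEq m] (B M : Matrix m m R) (t : R) :
    (pencil B M).det.eval t = (B + t • M).det := by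
  rw [← coe_evalRingHom, RingHom.map_det]
  congr 1
  ext i j
  simp [pencil_apply, mul_comm t]

end Pencil

theorem sigmaMap_add_smul_eq_eval {n : ℕ} (B M : Matrix (Fin n) (Fin n) ℂ) (i : Fin n)
    (t : ℂ) :
    sigmaMap n (B + t • M) i = (∑ s ∈ univ.powersetCard (i + 1),
      ((pencil B M).submatrix (Subtype.val : s → Fin n) Subtype.val).det).eval t := by
  rw [sigmaMap_eq_sum_minors, eval_finsetSum]
  refine Finset.sum_congr rfl fun s _ => ?_
  exact (eval_det_pencil (B.submatrix Subtype.val Subtype.val)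
    (M.submatrix Subtype.val Subtype.val) t).symm

def chainHeads (F1 S : Finset ℕ) : Finset ℕ := S.filter fun a => a ∈ F1 → a - 1 ∉ S

def jordanBlock (b : ℕ → ℕ) (l : ℕ) : Finset ℕ := Finset.Ico (b l) (b (l + 1))

section Blocks

variable {n m : ℕ} {F1 : Finset ℕ} {b : ℕ → ℕ}

theorem exists_mem_jordanBlock (hb1 : b 1 = 1) (hblast : b (m + 1) = n + 1) {a : ℕ}
    (ha : a ∈ Finset.Icc 1 n) : ∃ l ∈ Finset.Icc 1 m, a ∈ jordanBlock b l := by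
  rw [Finset.mem_Icc] at ha
  have hm : 1 ≤ m := by
    by_contra h
    rw [show m = 0 by omega, hb1] at hblast
    omega
  have hex : ∃ l, 1 ≤ l ∧ a < b (l + 1) := ⟨m, hm, by omega⟩
  obtain ⟨h1, h2⟩ := Nat.find_spec hex
  refine ⟨Nat.find hex, Finset.mem_Icc.2 ⟨h1, Nat.find_min' hex ⟨hm, by omega⟩⟩,
    Finset.mem_Ico.2 ⟨?_, h2⟩⟩
  rcases h1.eq_or_lt with h | h
  · rw [← h, hb1]
    exact ha.1
  · have := Nat.find_min hex (show Nat.find hex - 1 < Nat.find hex by omega)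
    rw [Nat.sub_add_cancel h.le] at this
    omega

theorem eq_of_mem_jordanBlock (hb : MonotoneOn b (Set.Icc 1 (m + 1))) {l l' a : ℕ}
    (hl : l ∈ Finset.Icc 1 m) (hl' : l' ∈ Finset.Icc 1 m) (ha : a ∈ jordanBlock b l)
    (ha' : a ∈ jordanBlock b l') : l = l' := by
  simp only [jordanBlock, Finset.mem_Ico, Finset.mem_Icc] at hl hl' ha ha'
  by_contra hne
  rcases Nat.lt_or_gt_of_ne hne with h | h
  · have : b (l + 1) ≤ b l' := hb ⟨by omega, by omega⟩ ⟨by omega, by omega⟩ h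
    omega
  · have : b (l' + 1) ≤ b l := hb ⟨by omega, by omega⟩ ⟨by omega, by omega⟩ h
    omega

theorem exists_mem_chainHeads_inter_jordanBlock {l : ℕ} (hbl : b l ∉ F1) {S : Finset ℕ}
    {a : ℕ} (ha : a ∈ S) (hal : a ∈ jordanBlock b l) :
    ∃ h ∈ chainHeads F1 S, h ∈ jordanBlock b l := by
  have hne : (S.filter (· ∈ jordanBlock b l)).Nonempty :=
    ⟨a, Finset.mem_filter.2 ⟨ha, hal⟩⟩
  set h := (S.filter (· ∈ jordanBlock b l)).min' hne
  obtain ⟨hS, hblock⟩ := Finset.mem_filter.1 ((S.filter (· ∈ jordanBlock b l)).min'_mem hne)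
  refine ⟨h, Finset.mem_filter.2 ⟨hS, fun hF1 hpred => ?_⟩, hblock⟩
  have hbh := Finset.mem_Ico.1 hblock
  have hlt : b l < h := lt_of_le_of_ne hbh.1 fun e => hbl (e ▸ hF1)
  have := (S.filter (· ∈ jordanBlock b l)).min'_le (h - 1)
    (Finset.mem_filter.2 ⟨hpred, Finset.mem_Ico.2 ⟨by omega, by omega⟩⟩)
  omega

theorem sum_gaps_le_of_subset_Icc (hb : MonotoneOn b (Set.Icc 1 (m + 1)))
    (hg : MonotoneOn (fun l => b (l + 1) - b l) (Set.Icc 1 m)) {k : ℕ} (hk : k ≤ m)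
    {U : Finset ℕ} (hU : U ⊆ Finset.Icc 1 k) :
    ∑ l ∈ U, (b (l + 1) - b l) ≤ b (k + 1) - b (k + 1 - #U) := by
  induction k generalizing U with
  | zero => simp [Finset.subset_empty.1 (by simpa using hU)]
  | succ k ih =>
    have hb' : ∀ l l', 1 ≤ l → l ≤ l' → l' ≤ m + 1 → b l ≤ b l' :=
      fun l l' h1 h2 h3 => hb ⟨h1, by omega⟩ ⟨by omega, h3⟩ h2
    have hcard : #U ≤ k + 1 := by simpa using Finset.card_le_card hU
    rw [← Finset.insert_Icc_right_eq_Icc_add_one (by omega)] at hU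
    by_cases hkU : k + 1 ∈ U
    · have hsum := ih (by omega) (Finset.subset_insert_iff.1 hU)
      have hpos : 1 ≤ #U := Finset.card_pos.2 ⟨_, hkU⟩
      rw [Finset.card_erase_of_mem hkU, show k + 1 - (#U - 1) = k + 1 + 1 - #U by omega] at hsum
      rw [← Finset.add_sum_erase U _ hkU]
      have := hb' (k + 1 + 1 - #U) (k + 1) (by omega) (by omega) (by omega)
      have := hb' (k + 1) (k + 1 + 1) (by omega) (by omega) (by omega)
      omega
    · have hsub := (Finset.subset_insert_iff_of_notMem hkU).1 hU
      have hsum := ih (by omega) hsub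
      have hcard : #U ≤ k := by simpa using Finset.card_le_card hsub
      rcases Nat.eq_zero_or_pos #U with h0 | hpos
      · simp [Finset.card_eq_zero.1 h0]
      have hgap : b (k + 1 - #U + 1) - b (k + 1 - #U) ≤ b (k + 1 + 1) - b (k + 1) :=
        hg ⟨by omega, by omega⟩ ⟨by omega, by omega⟩ (by omega)
      have := hb' (k + 1 - #U) (k + 1 - #U + 1) (by omega) (by omega) (by omega)
      have := hb' (k + 1 - #U + 1) (k + 1) (by omega) (by omega) (by omega)
      have := hb' (k + 1) (k + 1 + 1) (by omega) (by omega) (by omega)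
      rw [show k + 1 + 1 - #U = k + 1 - #U + 1 by omega]
      omega

theorem card_blockStarts_above_lt (hblast : b (m + 1) = n + 1)
    (hb : MonotoneOn b (Set.Icc 1 (m + 1)))
    (himage : Finset.Icc 1 n \ F1 = (Finset.Icc 1 m).image b) {u k : ℕ} (hu : 1 ≤ u)
    (hum : u ≤ m) (hkb : k ≤ b (m + 1) - b (m + 1 - u)) :
    #((Finset.Icc 1 n \ F1) ∩ Finset.Icc (n - k + 2) n) < u := by
  have hsub : (Finset.Icc 1 n \ F1) ∩ Finset.Icc (n - k + 2) n ⊆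
      (Finset.Ioc (m + 1 - u) m).image b := by
    intro x hx
    obtain ⟨hxF0, hxtop⟩ := Finset.mem_inter.1 hx
    rw [himage] at hxF0
    obtain ⟨l, hl, rfl⟩ := Finset.mem_image.1 hxF0
    have hl := Finset.mem_Icc.1 hl
    refine Finset.mem_image_of_mem b (Finset.mem_Ioc.2 ⟨?_, hl.2⟩)
    by_contra hle
    have : b l ≤ b (m + 1 - u) := hb ⟨hl.1, by omega⟩ ⟨by omega, by omega⟩ (by omega)
    have : b (m + 1 - u) ≤ b (m + 1) :=
      hb ⟨by omega, by omega⟩ ⟨by omega, le_rfl⟩ (by omega)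
    have := Finset.mem_Icc.1 hxtop
    omega
  have := (Finset.card_le_card hsub).trans Finset.card_image_le
  rw [Nat.card_Ioc] at this
  omega

theorem card_chainHeads_ge (hb1 : b 1 = 1) (hblast : b (m + 1) = n + 1)
    (hb : MonotoneOn b (Set.Icc 1 (m + 1)))
    (hg : MonotoneOn (fun l => b (l + 1) - b l) (Set.Icc 1 m))
    (himage : Finset.Icc 1 n \ F1 = (Finset.Icc 1 m).image b)
    {S : Finset ℕ} (hS : S ⊆ Finset.Icc 1 n) (hne : S.Nonempty) :
    1 + #((Finset.Icc 1 n \ F1) ∩ Finset.Icc (n - #S + 2) n) ≤ #(chainHeads F1 S) := by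
  set U := (Finset.Icc 1 m).filter fun l => ∃ a ∈ S, a ∈ jordanBlock b l
  have hUm : U ⊆ Finset.Icc 1 m := Finset.filter_subset _ _
  have hUpos : 1 ≤ #U := by
    obtain ⟨a, ha⟩ := hne
    obtain ⟨l, hl, hal⟩ := exists_mem_jordanBlock hb1 hblast (hS ha)
    exact Finset.card_pos.2 ⟨l, Finset.mem_filter.2 ⟨hl, a, ha, hal⟩⟩
  have hU_le_heads : #U ≤ #(chainHeads F1 S) := by
    refine card_le_card_of_forall_subsingleton (fun l h => h ∈ jordanBlock b l) (fun l hl => ?_)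
      fun h _ l hl l' hl' => eq_of_mem_jordanBlock hb (hUm hl.1) (hUm hl'.1) hl.2 hl'.2
    obtain ⟨hl, a, ha, hal⟩ := Finset.mem_filter.1 hl
    have hbl : b l ∉ F1 := (Finset.mem_sdiff.1 (himage ▸ Finset.mem_image_of_mem b hl)).2
    exact exists_mem_chainHeads_inter_jordanBlock hbl ha hal
  have hS_le : #S ≤ b (m + 1) - b (m + 1 - #U) :=
    calc #S ≤ #(U.biUnion (jordanBlock b)) := Finset.card_le_card fun a ha => by
            obtain ⟨l, hl, hal⟩ := exists_mem_jordanBlock hb1 hblast (hS ha)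
            exact Finset.mem_biUnion.2 ⟨l, Finset.mem_filter.2 ⟨hl, a, ha, hal⟩, hal⟩
      _ ≤ ∑ l ∈ U, #(jordanBlock b l) := Finset.card_biUnion_le
      _ = ∑ l ∈ U, (b (l + 1) - b l) := by simp only [jordanBlock, Nat.card_Ico]
      _ ≤ _ := sum_gaps_le_of_subset_Icc hb hg le_rfl hUm
  have := card_blockStarts_above_lt hblast hb himage hUpos
    (by simpa using Finset.card_le_card hUm) hS_le
  omega

end Blocks

theorem card_chainHeads_Icc {n i : ℕ} {F1 : Finset ℕ} (hi : 1 ≤ i) (hin : i ≤ n) :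
    #(chainHeads F1 (Finset.Icc (n - i + 1) n)) =
      1 + #((Finset.Icc 1 n \ F1) ∩ Finset.Icc (n - i + 2) n) := by
  have hheads : chainHeads F1 (Finset.Icc (n - i + 1) n) =
      insert (n - i + 1) ((Finset.Icc 1 n \ F1) ∩ Finset.Icc (n - i + 2) n) := by
    ext a
    simp only [chainHeads, Finset.mem_filter, Finset.mem_insert, Finset.mem_inter,
      Finset.mem_sdiff, Finset.mem_Icc]
    by_cases hF : a ∈ F1 <;> simp [hF] <;> omega
  rw [hheads, Finset.card_insert_of_notMem (by simp), add_comm]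

theorem card_filter_mem_of_subset_image {α β : Type*} [DecidableEq β] {f : α → β}
    (hf : Function.Injective f) {s : Finset α} {T : Finset β} (hT : T ⊆ s.image f) :
    #(s.filter fun a => f a ∈ T) = #T := by
  rw [← Finset.card_image_of_injective _ hf, ← Finset.filter_image (p := (· ∈ T)),
    Finset.filter_mem_eq_inter, Finset.inter_eq_right.2 hT]

def jordanNilpotent (R : Type*) [Zero R] [One R] (n : ℕ) (F1 : Finset ℕ) :
    Matrix (Fin n) (Fin n) R :=
  Matrix.of fun r c => if c.val + 1 ∈ F1 ∧ r.val + 1 = c.val then 1 else 0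

def topIndices (n i : ℕ) : Finset (Fin n) := univ.filter fun j => n - i ≤ j.val

def topCycle (n i : ℕ) : Equiv.Perm (Fin n) :=
  Equiv.ofBijective
    (fun j => if j.val < n - i then j
      else if j.val = n - i then ⟨n - 1, by have := j.isLt; omega⟩
      else ⟨j.val - 1, by have := j.isLt; omega⟩)
    (Finite.injective_iff_bijective.1 fun a b h => by
      have := a.isLt
      have := b.isLt
      split_ifs at h <;> simp only [Fin.ext_iff] at h ⊢ <;> omega)

def cycleClosure (R : Type*) [Zero R] [One R] (n : ℕ) (F1 : Finset ℕ) (i : ℕ) :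
    Matrix (Fin n) (Fin n) R :=
  Matrix.of fun r c => if n - i ≤ c.val ∧ r = topCycle n i c ∧
    ¬(c.val + 1 ∈ F1 ∧ r.val + 1 = c.val) then 1 else 0

section JordanPencil

variable {R : Type*} [CommRing R] {n : ℕ} {F1 : Finset ℕ}

theorem X_pow_card_chainHeads_dvd_det (M : Matrix (Fin n) (Fin n) R) (s : Finset (Fin n)) :
    (X : R[X]) ^ #(chainHeads F1 (s.image fun j => j.val + 1)) ∣
      ((pencil (jordanNilpotent R n F1) M).submatrix (Subtype.val : s → Fin n)
        Subtype.val).det := by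
  set S := s.image fun j : Fin n => j.val + 1
  set H := s.filter fun j => j.val + 1 ∈ chainHeads F1 S
  have hH : #(H.subtype (· ∈ s)) = #(chainHeads F1 S) := by
    rw [Finset.card_subtype, Finset.filter_true_of_mem fun j hj => (Finset.mem_filter.1 hj).1]
    exact card_filter_mem_of_subset_image ((add_left_injective 1).comp Fin.val_injective)
      (Finset.filter_subset _ _)
  rw [← hH]
  refine Matrix.pow_card_dvd_det_of_dvd_col _ _ fun j hj r => ?_
  obtain ⟨-, hhead⟩ := Finset.mem_filter.1 (Finset.mem_subtype.1 hj)
  have hB : jordanNilpotent R n F1 r j = 0 := by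
    rw [jordanNilpotent, Matrix.of_apply, if_neg]
    rintro ⟨hF, hrj⟩
    exact (Finset.mem_filter.1 hhead).2 hF (Finset.mem_image.2 ⟨r, r.2, by omega⟩)
  simp [pencil_apply, hB]

theorem X_pow_dvd_sum_minors_pencil {m : ℕ} {b : ℕ → ℕ} (hb1 : b 1 = 1)
    (hblast : b (m + 1) = n + 1) (hb : MonotoneOn b (Set.Icc 1 (m + 1)))
    (hg : MonotoneOn (fun l => b (l + 1) - b l) (Set.Icc 1 m))
    (himage : Finset.Icc 1 n \ F1 = (Finset.Icc 1 m).image b)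
    (M : Matrix (Fin n) (Fin n) R) {i : ℕ} (hi : 1 ≤ i) :
    (X : R[X]) ^ (1 + #((Finset.Icc 1 n \ F1) ∩ Finset.Icc (n - i + 2) n)) ∣
      ∑ s ∈ univ.powersetCard i, ((pencil (jordanNilpotent R n F1) M).submatrix
        (Subtype.val : s → Fin n) Subtype.val).det := by
  refine Finset.dvd_sum fun s hs => (pow_dvd_pow _ ?_).trans (X_pow_card_chainHeads_dvd_det M s)
  have hcard : #(s.image fun j : Fin n => j.val + 1) = i :=
    (Finset.card_image_of_injective s ((add_left_injective 1).comp Fin.val_injective)).trans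
      (Finset.mem_powersetCard.1 hs).2
  have hsub : s.image (fun j : Fin n => j.val + 1) ⊆ Finset.Icc 1 n := fun a ha => by
    obtain ⟨j, -, rfl⟩ := Finset.mem_image.1 ha
    exact Finset.mem_Icc.2 ⟨by omega, j.isLt⟩
  have := card_chainHeads_ge hb1 hblast hb hg himage hsub (Finset.card_pos.1 (by omega))
  rwa [hcard] at this

theorem card_topIndices {i : ℕ} (hi : i ≤ n) : #(topIndices n i) = i := by
  have := Finset.card_filter_add_card_filter_not (s := univ) (fun j : Fin n => j.val < n - i)
  rw [Fin.card_filter_val_lt, Finset.card_univ, Fintype.card_fin] at this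
  simp only [not_lt] at this
  rw [topIndices]
  omega

theorem image_topIndices (i : ℕ) :
    (topIndices n i).image (fun j => j.val + 1) = Finset.Icc (n - i + 1) n := by
  ext a
  simp only [topIndices, Finset.mem_image, Finset.mem_filter, Finset.mem_univ, true_and,
    Finset.mem_Icc]
  constructor
  · rintro ⟨j, hj, rfl⟩
    exact ⟨by omega, j.isLt⟩
  · intro ha
    exact ⟨⟨a - 1, by omega⟩, by simp only; omega, by simp only; omega⟩

theorem topCycle_val {i : ℕ} {j : Fin n} (hj : j ∈ topIndices n i) :
    (topCycle n i j).val = if j.val = n - i then n - 1 else j.val - 1 := by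
  have := (Finset.mem_filter.1 hj).2
  simp only [topCycle, Equiv.ofBijective_apply]
  split_ifs <;> first | rfl | omega

theorem topCycle_mem_topIndices_iff (i : ℕ) (j : Fin n) :
    topCycle n i j ∈ topIndices n i ↔ j ∈ topIndices n i := by
  have := j.isLt
  simp only [topIndices, Finset.mem_filter, Finset.mem_univ, true_and, topCycle,
    Equiv.ofBijective_apply]
  split_ifs <;> simp only <;> omega

def topCycleOn (n i : ℕ) : Equiv.Perm (topIndices n i) :=
  (topCycle n i).subtypePerm (topCycle_mem_topIndices_iff i)

theorem pencil_topCycle {i : ℕ} {j : Fin n} (hj : j ∈ topIndices n i) :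
    pencil (jordanNilpotent R n F1) (cycleClosure R n F1 i) (topCycle n i j) j =
      if j.val + 1 ∈ chainHeads F1 (Finset.Icc (n - i + 1) n) then X else 1 := by
  have hji := (Finset.mem_filter.1 hj).2
  have hlink : (j.val + 1 ∈ F1 ∧ (topCycle n i j).val + 1 = j.val) ↔
      j.val + 1 ∉ chainHeads F1 (Finset.Icc (n - i + 1) n) := by
    have := j.isLt
    simp only [chainHeads, Finset.mem_filter, Finset.mem_Icc, topCycle_val hj]
    by_cases hF : j.val + 1 ∈ F1 <;> by_cases hlo : j.val = n - i <;> simp [hF, hlo] <;> omega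
  simp only [pencil_apply, jordanNilpotent, cycleClosure, Matrix.of_apply, hlink]
  split_ifs <;> simp_all

theorem pencil_eq_zero_of_ne_topCycle {i : ℕ} {r j : Fin n} (hr : r ∈ topIndices n i)
    (hj : j ∈ topIndices n i) (hne : r ≠ topCycle n i j) :
    pencil (jordanNilpotent R n F1) (cycleClosure R n F1 i) r j = 0 := by
  have hri := (Finset.mem_filter.1 hr).2
  have hB : ¬(j.val + 1 ∈ F1 ∧ r.val + 1 = j.val) := fun h =>
    hne (Fin.ext (by rw [topCycle_val hj]; split_ifs <;> omega))
  simp [pencil_apply, jordanNilpotent, cycleClosure, hB, hne]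

theorem det_pencil_topIndices (i : ℕ) :
    ((pencil (jordanNilpotent R n F1) (cycleClosure R n F1 i)).submatrix
        (Subtype.val : topIndices n i → Fin n) Subtype.val).det =
      ((Equiv.Perm.sign (topCycleOn n i) : ℤ) : R[X]) *
        X ^ #(chainHeads F1 (Finset.Icc (n - i + 1) n)) := by
  refine (Matrix.det_eq_sign_mul_prod_of_col_support _ (topCycleOn n i)
    fun r j h => pencil_eq_zero_of_ne_topCycle r.2 j.2 fun e => h (Subtype.ext e)).trans ?_
  congr 1
  calc ∏ j : topIndices n i, _
      = ∏ j ∈ topIndices n i,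
          pencil (jordanNilpotent R n F1) (cycleClosure R n F1 i) (topCycle n i j) j :=
        Finset.prod_coe_sort _ _
    _ = ∏ j ∈ topIndices n i,
          if j.val + 1 ∈ chainHeads F1 (Finset.Icc (n - i + 1) n) then X else 1 :=
        Finset.prod_congr rfl fun j hj => pencil_topCycle hj
    _ = _ := by
      rw [Finset.prod_ite, Finset.prod_const, Finset.prod_const_one, mul_one,
        card_filter_mem_of_subset_image (f := fun j : Fin n => j.val + 1)
          ((add_left_injective 1).comp Fin.val_injective)
          ((image_topIndices i).symm ▸ Finset.filter_subset _ _)]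

theorem det_pencil_cycleClosure_eq_zero {i : ℕ} (hin : i ≤ n) {s : Finset (Fin n)}
    (hs : #s = i) (hne : s ≠ topIndices n i) :
    ((pencil (jordanNilpotent R n F1) (cycleClosure R n F1 i)).submatrix
        (Subtype.val : s → Fin n) Subtype.val).det = 0 := by
  obtain ⟨j, hjs, hj⟩ : ∃ j ∈ s, j.val < n - i := by
    by_contra! h
    refine hne (Finset.eq_of_subset_of_card_le (fun j hj => ?_) (by rw [card_topIndices hin, hs]))
    exact Finset.mem_filter.2 ⟨Finset.mem_univ _, h j hj⟩
  have hmin := s.min'_le j hjs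
  refine Matrix.det_eq_zero_of_column_eq_zero ⟨s.min' ⟨j, hjs⟩, s.min'_mem _⟩ fun r => ?_
  have hr := s.min'_le r r.2
  simp only [Matrix.submatrix_apply, pencil_apply, jordanNilpotent, cycleClosure, Matrix.of_apply]
  rw [if_neg (fun h => by have := Fin.le_def.1 hr; omega),
    if_neg (fun h => by have := Fin.le_def.1 hmin; omega)]
  simp

theorem sum_minors_pencil_cycleClosure {i : ℕ} (hin : i ≤ n) :
    ∑ s ∈ univ.powersetCard i,
        ((pencil (jordanNilpotent R n F1) (cycleClosure R n F1 i)).submatrix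
          (Subtype.val : s → Fin n) Subtype.val).det =
      ((Equiv.Perm.sign (topCycleOn n i) : ℤ) : R[X]) *
        X ^ #(chainHeads F1 (Finset.Icc (n - i + 1) n)) := by
  rw [Finset.sum_eq_single_of_mem (topIndices n i)
    (Finset.mem_powersetCard.2 ⟨Finset.subset_univ _, card_topIndices hin⟩)
    fun s hs hne => det_pencil_cycleClosure_eq_zero hin (Finset.mem_powersetCard.1 hs).2 hne,
    det_pencil_topIndices]

end JordanPencil

theorem sigma_vanishing_order_general (n : ℕ) (F1 : Finset ℕ)
    (B : Matrix (Fin n) (Fin n) ℂ)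
    (hB : ∀ i k : Fin n, B i k = if (k.val + 1) ∈ F1 ∧ i.val + 1 = k.val then 1 else 0)
    (m : ℕ)
    (b : ℕ → ℕ) (hb1 : b 1 = 1) (hblast : b (m + 1) = n + 1)
    (hmono : ∀ l, 1 ≤ l → l ≤ m → b l < b (l + 1))
    (himage : Finset.Icc 1 n \ F1 = Finset.image b (Finset.Icc 1 m))
    (hgap : ∀ l, 1 ≤ l → l + 1 ≤ m → b (l + 1) - b l ≤ b (l + 2) - b (l + 1))
    (d : ℕ → ℕ)
    (hd : ∀ i, d i = 1 + ((Finset.Icc 1 n \ F1) ∩ Finset.Icc (n - i + 2) n).card) :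
    ∀ i : Fin n,
      (∀ M : Matrix (Fin n) (Fin n) ℂ, ∀ k, k < d (i.val + 1) →
        iteratedDeriv k (fun t : ℂ => sigmaMap n (B + t • M) i) 0 = 0) ∧
      (∃ M : Matrix (Fin n) (Fin n) ℂ,
        iteratedDeriv (d (i.val + 1)) (fun t : ℂ => sigmaMap n (B + t • M) i) 0 ≠ 0) := by
  obtain rfl : B = jordanNilpotent ℂ n F1 := Matrix.ext hB
  have hb : MonotoneOn b (Set.Icc 1 (m + 1)) := monotoneOn_of_le_add_one Set.ordConnected_Icc
    fun l _ hl hl' => (hmono l hl.1 (by have := hl'.2; omega)).le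
  have hg : MonotoneOn (fun l => b (l + 1) - b l) (Set.Icc 1 m) :=
    monotoneOn_of_le_add_one Set.ordConnected_Icc fun l _ hl hl' => hgap l hl.1 hl'.2
  intro i
  have hi : i.val + 1 ≤ n := i.isLt
  simp_rw [sigmaMap_add_smul_eq_eval, iteratedDeriv_eval_zero, hd]
  refine ⟨fun M k hk => ?_, ⟨cycleClosure ℂ n F1 (i + 1), ?_⟩⟩
  · obtain ⟨q, hq⟩ :=
      X_pow_dvd_sum_minors_pencil hb1 hblast hb hg himage M (Nat.le_add_left 1 i)
    rw [hq, coeff_X_pow_mul', if_neg (by omega), mul_zero]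
  · rw [sum_minors_pencil_cycleClosure hi, card_chainHeads_Icc (Nat.le_add_left 1 i) hi,
      ← C_eq_intCast, coeff_C_mul_X_pow, if_pos rfl]
    exact mul_ne_zero (Nat.cast_ne_zero.2 (Nat.factorial_ne_zero _))
      (Int.cast_ne_zero.2 (Units.ne_zero _))

/-- with `B` a nilpotent Jordan-form matrix as above, for each `i`
the function `t ↦ σ_i(B + t M)` vanishes to order at least `d i` at `t = 0` for all
`M`, and there is an `M` for which the vanishing order is exactly `d i`. -/
theorem sigma_vanishing_order (n : ℕ) (F1 : Finset ℕ) (hF1 : F1 ⊆ Finset.Icc 2 n)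
    (B : Matrix (Fin n) (Fin n) ℂ)
    (hB : ∀ i k : Fin n, B i k = if (k.val + 1) ∈ F1 ∧ i.val + 1 = k.val then 1 else 0)
    (m : ℕ) (hm : m = (Finset.Icc 1 n \ F1).card)
    (b : ℕ → ℕ) (hb1 : b 1 = 1) (hblast : b (m + 1) = n + 1)
    (hmono : ∀ l, 1 ≤ l → l ≤ m → b l < b (l + 1))
    (himage : Finset.Icc 1 n \ F1 = Finset.image b (Finset.Icc 1 m))
    (hgap : ∀ l, 1 ≤ l → l + 1 ≤ m → b (l + 1) - b l ≤ b (l + 2) - b (l + 1))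
    (d : ℕ → ℕ)
    (hd : ∀ i, d i = 1 + ((Finset.Icc 1 n \ F1) ∩ Finset.Icc (n - i + 2) n).card) :
    ∀ i : Fin n,
      (∀ M : Matrix (Fin n) (Fin n) ℂ, ∀ k, k < d (i.val + 1) →
        iteratedDeriv k (fun t : ℂ => sigmaMap n (B + t • M) i) 0 = 0) ∧
      (∃ M : Matrix (Fin n) (Fin n) ℂ,
        iteratedDeriv (d (i.val + 1)) (fun t : ℂ => sigmaMap n (B + t • M) i) 0 ≠ 0) :=
  sigma_vanishing_order_general n F1 B hB m b hb1 hblast hmono himage hgap d hd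
end
end

section
/- Let ψ ∈ M_n be a matrix whose only possibly nonzero entries are the superdiagonal entries ψ_{k−1,k} = f_k for 2 ≤ k ≤ n and the last-row entries ψ_{n,k} = ψ_{n+1−k} for 1 ≤ k ≤ n (so the last row is (ψ_n, ψ_{n−1}, …, ψ_2, ψ_1)). Then for every 1 ≤ i ≤ n, σ_i(ψ) = (−1)^{i+1} ψ_i ∏_{k=n−i+2}^{n} f_k. -/
open Metric Set Polynomial

noncomputable section

/-! Expanding `det (X - ψ)` along the first column leaves two terms: `X` times the
characteristic polynomial of a matrix of the same shape and size `n - 1` (with `f` shifted), and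
`ψ_n` times a lower triangular minor with diagonal `-f 2, …, -f n`. By induction,
`χ_ψ = Xⁿ - ∑ᵢ ψᵢ (∏_{k=n-i+2}^n f k) X^(n-i)`, and `σᵢ(ψ)` is read off the coefficients. -/

lemma Polynomial.coeff_X_pow_sub_sum_C_mul_X_pow {R : Type*} [CommRing R] {n i : ℕ}
    (a : ℕ → R) (hi : i < n) :
    (X ^ n - ∑ j ∈ Finset.range n, C (a j) * X ^ (n - (j + 1))).coeff (n - (i + 1)) = -a i := by
  rw [coeff_sub, coeff_X_pow, if_neg (by omega), finsetSum_coeff,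
    Finset.sum_eq_single_of_mem i (Finset.mem_range.mpr hi) fun j hj hji => ?_]
  · simp
  · rw [coeff_C_mul_X_pow, if_neg (by have := Finset.mem_range.mp hj; omega)]

namespace Matrix

variable {R : Type*} [CommRing R]

lemma charmatrix_submatrix {m n : Type*} [Fintype m] [DecidableEq m] [Fintype n] [DecidableEq n]
    (A : Matrix n n R) {e : m → n} (he : Function.Injective e) :
    (charmatrix A).submatrix e e = charmatrix (A.submatrix e e) := by
  ext i j
  by_cases h : i = j
  · subst h; simp
  · rw [submatrix_apply, charmatrix_apply_ne _ _ _ (he.ne h), charmatrix_apply_ne _ _ _ h,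
      submatrix_apply]

/-- The matrix with superdiagonal `f 2, …, f n` and last row `p n, …, p 1` (1-based indices). -/
def companionLike (n : ℕ) (f p : ℕ → R) : Matrix (Fin n) (Fin n) R :=
  of fun i j =>
    if i.val + 1 = n then p (n - j.val) else if j.val = i.val + 1 then f (j.val + 1) else 0

lemma companionLike_submatrix_succ (n : ℕ) (f p : ℕ → R) :
    (companionLike (n + 1) f p).submatrix Fin.succ Fin.succ =
      companionLike n (fun k => f (k + 1)) p := by
  ext i j
  simp only [companionLike, submatrix_apply, of_apply, Fin.val_succ]
  split_ifs <;> first | rfl | omega | (congr 1; omega)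

lemma det_charmatrix_companionLike_submatrix_castSucc_succ (n : ℕ) (f p : ℕ → R) :
    ((charmatrix (companionLike (n + 1) f p)).submatrix Fin.castSucc Fin.succ).det =
      (-1) ^ n * C (∏ k ∈ Finset.Icc 2 (n + 1), f k) := by
  have hne {i j : Fin n} (hij : i ≤ j) : (Fin.castSucc i : Fin (n + 1)) ≠ Fin.succ j := by
    rw [Ne, Fin.ext_iff, Fin.val_castSucc, Fin.val_succ]
    exact fun h => absurd hij (by rw [not_le, Fin.lt_def]; omega)
  have hlower : ((charmatrix (companionLike (n + 1) f p)).submatrix Fin.castSucc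
      Fin.succ).IsLowerTriangular := by
    intro i j (hij : i < j)
    rw [submatrix_apply, charmatrix_apply_ne _ _ _ (hne hij.le)]
    simp only [companionLike, of_apply, Fin.val_castSucc, Fin.val_succ]
    rw [Fin.lt_def] at hij
    rw [if_neg (by omega), if_neg (by omega), map_zero, neg_zero]
  have hdiag (i : Fin n) :
      (charmatrix (companionLike (n + 1) f p)).submatrix Fin.castSucc Fin.succ i i =
        -C (f (i + 2)) := by
    rw [submatrix_apply, charmatrix_apply_ne _ _ _ (hne le_rfl)]
    simp [companionLike, i.isLt.ne]
  have hIcc : ∏ k ∈ Finset.Icc 2 (n + 1), f k = ∏ i ∈ Finset.range n, f (i + 2) := by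
    rw [← Finset.Ico_add_one_right_eq_Icc, Finset.prod_Ico_eq_prod_range,
      show n + 1 + 1 - 2 = n by omega]
    simp only [add_comm]
  rw [det_of_isLowerTriangular _ hlower, Fintype.prod_congr _ _ hdiag, Finset.prod_neg, hIcc,
    map_prod, Fin.prod_univ_eq_prod_range (fun i => C (f (i + 2))), Finset.card_univ,
    Fintype.card_fin]

lemma charpoly_companionLike_succ (n : ℕ) (f p : ℕ → R) :
    (companionLike (n + 1) f p).charpoly =
      X * (companionLike n (fun k => f (k + 1)) p).charpoly -
        C (p (n + 1) * ∏ k ∈ Finset.Icc 2 (n + 1), f k) := by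
  obtain _ | m := n
  · simp [charpoly, companionLike]
  have hM00 : charmatrix (companionLike (m + 2) f p) 0 0 = X := by simp [companionLike]
  have hMlast : charmatrix (companionLike (m + 2) f p) (Fin.last (m + 1)) 0 = -C (p (m + 2)) := by
    rw [charmatrix_apply_ne _ _ _ (Fin.last_pos.ne')]
    simp [companionLike]
  have hMmid (i : Fin (m + 1)) (hi : i ≠ Fin.last m) :
      charmatrix (companionLike (m + 2) f p) i.succ 0 = 0 := by
    have : (i : ℕ) < m := Fin.val_lt_last hi
    rw [charmatrix_apply_ne _ _ _ (Fin.succ_ne_zero i), companionLike, of_apply,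
      if_neg (by rw [Fin.val_succ]; omega), if_neg (by simp), map_zero, neg_zero]
  have hsign : ((-1 : R[X]) ^ (m + 1)) * (-1) ^ (m + 1) = 1 := by
    rw [← mul_pow, neg_one_mul, neg_neg, one_pow]
  rw [charpoly, det_succ_column_zero, Fin.sum_univ_succ,
    Finset.sum_eq_single (Fin.last m) (fun i _ hi => by rw [hMmid i hi, mul_zero, zero_mul])
      (by simp)]
  rw [Fin.succAbove_zero, Fin.succ_last, Fin.succAbove_last, hM00, hMlast,
    charmatrix_submatrix _ (Fin.succ_injective _), companionLike_submatrix_succ,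
    det_charmatrix_companionLike_submatrix_castSucc_succ, charpoly, map_mul, Fin.val_zero,
    Fin.val_last, Nat.succ_eq_add_one]
  linear_combination -C (p (m + 2)) * C (∏ k ∈ Finset.Icc 2 (m + 1 + 1), f k) * hsign

theorem charpoly_companionLike (n : ℕ) (f p : ℕ → R) :
    (companionLike n f p).charpoly = X ^ n - ∑ i ∈ Finset.range n,
      C (p (i + 1) * ∏ k ∈ Finset.Icc (n - (i + 1) + 2) n, f k) * X ^ (n - (i + 1)) := by
  induction n generalizing f with
  | zero => simp [charpoly_isEmpty]
  | succ n ih =>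
    have hshift (a : ℕ) :
        ∏ k ∈ Finset.Icc a n, f (k + 1) = ∏ k ∈ Finset.Icc (a + 1) (n + 1), f k := by
      rw [← Finset.map_add_right_Icc, Finset.prod_map]
      rfl
    rw [charpoly_companionLike_succ, ih, Finset.sum_range_succ, mul_sub, Finset.mul_sum,
      ← pow_succ', Nat.sub_self, pow_zero, mul_one, zero_add, sub_sub]
    congr 2
    refine Finset.sum_congr rfl fun i hi => ?_
    have hi : i < n := Finset.mem_range.mp hi
    rw [hshift, show n + 1 - (i + 1) = n - (i + 1) + 1 by omega, pow_succ, add_right_comm]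
    ring

end Matrix

/-- for a matrix `ψ` whose only possibly nonzero entries are the
superdiagonal entries `ψ_{k-1,k} = f k` (`2 ≤ k ≤ n`) and the last row
`(ψ_n, ψ_{n-1}, …, ψ_1)` (1-based indices), one has
`σ_i(ψ) = (-1)^(i+1) ψ_i ∏_{k=n-i+2}^n f k`. -/
theorem sigma_of_companion_like (n : ℕ) (f p : ℕ → ℂ)
    (ψ : Matrix (Fin n) (Fin n) ℂ)
    (hψ : ∀ i j : Fin n, ψ i j =
      if i.val + 1 = n then p (n - j.val)
      else if j.val = i.val + 1 then f (j.val + 1) else 0) :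
    ∀ i : Fin n, sigmaMap n ψ i =
      (-1 : ℂ) ^ (i.val + 1 + 1) * p (i.val + 1) *
        ∏ k ∈ Finset.Icc (n - (i.val + 1) + 2) n, f k := by
  intro i
  obtain rfl : ψ = Matrix.companionLike n f p := Matrix.ext hψ
  rw [sigmaMap, Matrix.charpoly_companionLike,
    Polynomial.coeff_X_pow_sub_sum_C_mul_X_pow _ i.isLt, pow_succ]
  ring
end
end
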